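/- Let π, π̃ ∈ (0,1), μ, μ̃ > 0, and σ, σ̃ > 0 with (μ, σ) ≠ (0, 1) and (μ̃, σ̃) ≠ (0, 1). If π φ(z; 0, 1) + (1−π) φ(z; μ, σ²) = π̃ φ(z; 0, 1) + (1−π̃) φ(z; μ̃, σ̃²) for almost all z ∈ ℝ, then π = π̃, μ = μ̃, and σ = σ̃. -/

import Mathlib

open MeasureTheory

/-- Normal density with mean `m` and standard deviation `s`. -/
noncomputable def normalPDF (m s z : ℝ) : ℝ :=
  (1 / (s * Real.sqrt (2 * Real.pi))) * Real.exp (-((z - m) ^ 2) / (2 * s ^ 2))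

/-!
By continuity the two mixtures agree everywhere; multiplied by `exp (z ^ 2 / 2)` they read
`k + c * exp (α z² + β z) = c' * exp (α' z² + β' z)` with `c, c' > 0`, `β, β' > 0`,
`k = (p - p') φ(0; 0, 1)`, `α = 1/2 - 1/(2σ²)` and `β = μ/σ²`. Dividing by
`exp (α' z² + β' z)` gives
`c * exp ((α - α') z² + (β - β') z) = c' - k * exp (-(α' z² + β' z))`.
Up to swapping the two sides, either `α' ≥ 0`, so the last term vanishes at `+∞`, or
`α, α' < 0`, which forces `k = 0`. Either way the quadratic `(α - α') z² + (β - β') z` has a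
finite limit at `+∞`, hence vanishes, and then `k = 0` as well.
-/

open Filter Real Topology

lemma tendsto_quadratic_atTop {a b : ℝ} (h : 0 < a ∨ a = 0 ∧ 0 < b) :
    Tendsto (fun z : ℝ => a * z ^ 2 + b * z) atTop atTop := by
  rcases h with ha | ⟨rfl, hb⟩
  · have hlin : Tendsto (fun z : ℝ => a * z + b) atTop atTop :=
      tendsto_atTop_add_const_right _ b (tendsto_id.const_mul_atTop ha)
    refine (tendsto_id.atTop_mul_atTop₀ hlin).congr fun z => ?_
    simp only [id]
    ring
  · simpa using tendsto_id.const_mul_atTop hb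

lemma eq_zero_of_tendsto_quadratic {a b L : ℝ}
    (h : Tendsto (fun z : ℝ => a * z ^ 2 + b * z) atTop (𝓝 L)) : a = 0 ∧ b = 0 := by
  have nonpos : ∀ {a b L : ℝ}, Tendsto (fun z : ℝ => a * z ^ 2 + b * z) atTop (𝓝 L) →
      a ≤ 0 ∧ (a = 0 → b ≤ 0) := by
    intro a b L h
    by_contra hpos
    refine not_tendsto_atTop_of_tendsto_nhds h (tendsto_quadratic_atTop ?_)
    grind
  have hneg : Tendsto (fun z : ℝ => (-a) * z ^ 2 + (-b) * z) atTop (𝓝 (-L)) :=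
    h.neg.congr fun z => by ring
  obtain ⟨ha, hb⟩ := nonpos h
  obtain ⟨ha', hb'⟩ := nonpos hneg
  have ha0 : a = 0 := by linarith
  exact ⟨ha0, by linarith [hb ha0, hb' (by rw [ha0, neg_zero])]⟩

lemma tendsto_exp_neg_quadratic_atTop {a b : ℝ} (ha : 0 ≤ a) (hb : 0 < b) :
    Tendsto (fun z : ℝ => exp (-(a * z ^ 2 + b * z))) atTop (𝓝 0) :=
  tendsto_exp_atBot.comp <| tendsto_neg_atTop_atBot.comp <|
    tendsto_quadratic_atTop (ha.lt_or_eq.imp id fun h => ⟨h.symm, hb⟩)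

lemma tendsto_exp_quadratic_atTop_of_neg {a b : ℝ} (ha : a < 0) :
    Tendsto (fun z : ℝ => exp (a * z ^ 2 + b * z)) atTop (𝓝 0) := by
  refine tendsto_exp_atBot.comp <| (tendsto_neg_atTop_atBot.comp <|
    tendsto_quadratic_atTop (a := -a) (b := -b) (Or.inl (neg_pos.2 ha))).congr fun z => ?_
  simp only [Function.comp_apply]
  ring

section ExpQuadratic

variable {k c c' α β α' β' : ℝ}

lemma eq_of_const_add_mul_exp_quadratic_eq_of_tendsto (hc : 0 < c) (hc' : 0 < c')
    (h : ∀ z : ℝ, k + c * exp (α * z ^ 2 + β * z) = c' * exp (α' * z ^ 2 + β' * z))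
    (hk : Tendsto (fun z : ℝ => k * exp (-(α' * z ^ 2 + β' * z))) atTop (𝓝 0)) :
    α = α' ∧ β = β' ∧ k = 0 := by
  have hdiv : ∀ z : ℝ, c * exp ((α - α') * z ^ 2 + (β - β') * z)
      = c' - k * exp (-(α' * z ^ 2 + β' * z)) := fun z => by
    have hq : (α - α') * z ^ 2 + (β - β') * z
        = (α * z ^ 2 + β * z) + -(α' * z ^ 2 + β' * z) := by ring
    have hinv : exp (α' * z ^ 2 + β' * z) * exp (-(α' * z ^ 2 + β' * z)) = 1 := by
      rw [← exp_add, add_neg_cancel, exp_zero]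
    rw [hq, exp_add]
    linear_combination exp (-(α' * z ^ 2 + β' * z)) * h z + c' * hinv
  have hexp :
      Tendsto (fun z : ℝ => exp ((α - α') * z ^ 2 + (β - β') * z)) atTop (𝓝 (c' / c)) := by
    have hlim := (tendsto_const_nhds (x := c')).sub hk
    rw [sub_zero] at hlim
    refine (hlim.div_const c).congr fun z => ?_
    rw [← hdiv z, mul_div_cancel_left₀ _ hc.ne']
  have hlog := hexp.log (div_pos hc' hc).ne'
  simp only [log_exp] at hlog
  obtain ⟨hα, hβ⟩ := eq_zero_of_tendsto_quadratic hlog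
  have hα' : α = α' := sub_eq_zero.1 hα
  have hβ' : β = β' := sub_eq_zero.1 hβ
  subst hα' hβ'
  simp only [sub_self, zero_mul, add_zero, exp_zero, mul_one] at hdiv
  have hcc : c' - c = 0 :=
    tendsto_nhds_unique (tendsto_const_nhds.congr fun z => by linarith [hdiv z]) hk
  have h0 := hdiv 0
  norm_num at h0
  exact ⟨rfl, rfl, by linarith⟩

lemma eq_of_const_add_mul_exp_quadratic_eq (hc : 0 < c) (hc' : 0 < c')
    (hβ : 0 < β) (hβ' : 0 < β')
    (h : ∀ z : ℝ, k + c * exp (α * z ^ 2 + β * z) = c' * exp (α' * z ^ 2 + β' * z)) :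
    α = α' ∧ β = β' ∧ k = 0 := by
  rcases le_or_gt 0 α' with hα' | hα'
  · exact eq_of_const_add_mul_exp_quadratic_eq_of_tendsto hc hc' h
      (by simpa using (tendsto_exp_neg_quadratic_atTop hα' hβ').const_mul k)
  rcases le_or_gt 0 α with hα | hα
  · -- the equation with its two sides swapped is of the same form, with `-k` for `k`
    obtain ⟨rfl, rfl, hk⟩ := eq_of_const_add_mul_exp_quadratic_eq_of_tendsto hc' hc
      (k := -k) (α := α') (β := β') (α' := α) (β' := β) (fun z => by linarith [h z])
      (by simpa using (tendsto_exp_neg_quadratic_atTop hα hβ).const_mul (-k))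
    exact ⟨rfl, rfl, neg_eq_zero.1 hk⟩
  have hk : k = 0 := by
    have hlim := ((tendsto_exp_quadratic_atTop_of_neg (b := β') hα').const_mul c').sub
      ((tendsto_exp_quadratic_atTop_of_neg (b := β) hα).const_mul c)
    rw [mul_zero, mul_zero, sub_zero] at hlim
    exact tendsto_nhds_unique (tendsto_const_nhds.congr fun z => by linarith [h z]) hlim
  exact eq_of_const_add_mul_exp_quadratic_eq_of_tendsto hc hc' h (by simp [hk])

end ExpQuadratic

lemma normalPDF_pos {m s : ℝ} (hs : 0 < s) (z : ℝ) : 0 < normalPDF m s z := by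
  unfold normalPDF
  positivity

@[fun_prop]
lemma continuous_normalPDF (m s : ℝ) : Continuous (normalPDF m s) := by
  unfold normalPDF
  fun_prop

lemma normalPDF_mul_exp_half_sq {m s : ℝ} (hs : 0 < s) (z : ℝ) :
    normalPDF m s z * exp (z ^ 2 / 2)
      = normalPDF m s 0 * exp ((1 / 2 - 1 / (2 * s ^ 2)) * z ^ 2 + m / s ^ 2 * z) := by
  unfold normalPDF
  rw [mul_assoc, ← exp_add, mul_assoc, ← exp_add]
  congr 2
  field_simp
  ring

theorem stmt19_general (p p' μ μ' σ σ' : ℝ)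
    (hp : p ∈ Set.Ioo (0 : ℝ) 1) (hp' : p' ∈ Set.Ioo (0 : ℝ) 1)
    (hμ : 0 < μ) (hμ' : 0 < μ') (hσ : 0 < σ) (hσ' : 0 < σ')
    (heq : ∀ᵐ z ∂(volume : Measure ℝ),
      p * normalPDF 0 1 z + (1 - p) * normalPDF μ σ z
        = p' * normalPDF 0 1 z + (1 - p') * normalPDF μ' σ' z) :
    p = p' ∧ μ = μ' ∧ σ = σ' := by
  have hpt :=
    funext_iff.1 <| (Continuous.ae_eq_iff_eq volume (by fun_prop) (by fun_prop)).1 heq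
  have hstd : ∀ z, normalPDF 0 1 z * exp (z ^ 2 / 2) = normalPDF 0 1 0 := fun z => by
    simpa using normalPDF_mul_exp_half_sq (m := 0) one_pos z
  obtain ⟨hα, hβ, hk⟩ :=
    eq_of_const_add_mul_exp_quadratic_eq (k := (p - p') * normalPDF 0 1 0)
    (mul_pos (sub_pos.2 hp.2) (normalPDF_pos hσ 0))
    (mul_pos (sub_pos.2 hp'.2) (normalPDF_pos hσ' 0))
    (div_pos hμ (pow_pos hσ 2)) (div_pos hμ' (pow_pos hσ' 2)) fun z => by
      linear_combination exp (z ^ 2 / 2) * hpt z - (p - p') * hstd z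
        - (1 - p) * normalPDF_mul_exp_half_sq (m := μ) hσ z
        + (1 - p') * normalPDF_mul_exp_half_sq (m := μ') hσ' z
  have hσσ : σ = σ' := by
    have hsq : σ ^ 2 = σ' ^ 2 := by field_simp at hα; linarith
    exact (pow_left_inj₀ hσ.le hσ'.le two_ne_zero).1 hsq
  subst hσσ
  exact ⟨sub_eq_zero.1 ((mul_eq_zero.1 hk).resolve_right (normalPDF_pos one_pos 0).ne'),
    by field_simp at hβ; exact hβ, rfl⟩

theorem stmt19 (p p' μ μ' σ σ' : ℝ)
    (hp : p ∈ Set.Ioo (0 : ℝ) 1) (hp' : p' ∈ Set.Ioo (0 : ℝ) 1)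
    (hμ : 0 < μ) (hμ' : 0 < μ') (hσ : 0 < σ) (hσ' : 0 < σ')
    (hne : (μ, σ) ≠ ((0 : ℝ), (1 : ℝ))) (hne' : (μ', σ') ≠ ((0 : ℝ), (1 : ℝ)))
    (heq : ∀ᵐ z ∂(volume : Measure ℝ),
      p * normalPDF 0 1 z + (1 - p) * normalPDF μ σ z
        = p' * normalPDF 0 1 z + (1 - p') * normalPDF μ' σ' z) :
    p = p' ∧ μ = μ' ∧ σ = σ' :=
  stmt19_general p p' μ μ' σ σ' hp hp' hμ hμ' hσ hσ' heq
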